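/- Let β=(β_n)_{n∈ℕ} be a Cantor base with x_β<+∞ and let a,b∈S'_β. Then: (1) if a <_lex b then val_β(a) ≤ val_β(b); (2) if val_β(a) < val_β(b) then a <_lex b. -/

import Mathlib

open Filter Topology

/-- A Cantor real base: a sequence of reals `> 1` whose infinite product diverges to `+∞`. -/
structure IsCantorBase (β : ℕ → ℝ) : Prop where
  one_lt : ∀ n, 1 < β n
  prod_tendsto : Tendsto (fun N => ∏ i ∈ Finset.range N, β i) atTop atTop

/-- The product `β_0 ⋯ β_n`. -/
noncomputable def prodUpTo (β : ℕ → ℝ) (n : ℕ) : ℝ := ∏ i ∈ Finset.range (n + 1), β i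

/-- The shifted base `β^(n) = (β_n, β_{n+1}, …)`. -/
def shiftBase (β : ℕ → ℝ) (n : ℕ) : ℕ → ℝ := fun m => β (n + m)

/-- `x_β = Σ_{n} (⌈β_n⌉ - 1)/(β_0 ⋯ β_n)`. -/
noncomputable def xB (β : ℕ → ℝ) : ℝ := ∑' n, ((⌈β n⌉ : ℝ) - 1) / prodUpTo β n

/-- The condition `x_β < +∞`, i.e. the series defining `x_β` converges. -/
def XBSummable (β : ℕ → ℝ) : Prop :=
  Summable (fun n => ((⌈β n⌉ : ℝ) - 1) / prodUpTo β n)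

/-- `val_β(a) = Σ_n a_n/(β_0 ⋯ β_n)`. -/
noncomputable def valB (β : ℕ → ℝ) (a : ℕ → ℤ) : ℝ := ∑' n, (a n : ℝ) / prodUpTo β n

/-- The digit condition `a_n ∈ [[0, ⌈β_n⌉ - 1]]` for all `n`. -/
def validWord (β : ℕ → ℝ) (a : ℕ → ℤ) : Prop := ∀ n, 0 ≤ a n ∧ a n ≤ ⌈β n⌉ - 1

/-- The flip map `θ_β`. -/
noncomputable def theta (β : ℕ → ℝ) (a : ℕ → ℤ) : ℕ → ℤ := fun n => ⌈β n⌉ - 1 - a n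

/-- The greedy remainders `r_{β,n}(x)`. -/
noncomputable def greedyR (β : ℕ → ℝ) (x : ℝ) : ℕ → ℝ
  | 0 => β 0 * x - (⌊β 0 * x⌋ : ℝ)
  | n + 1 => β (n + 1) * greedyR β x n - (⌊β (n + 1) * greedyR β x n⌋ : ℝ)

/-- The greedy digits `ε_{β,n}(x)`; `greedyDigit β x` is the greedy β-expansion `d_β(x)`. -/
noncomputable def greedyDigit (β : ℕ → ℝ) (x : ℝ) : ℕ → ℤ
  | 0 => ⌊β 0 * x⌋
  | n + 1 => ⌊β (n + 1) * greedyR β x n⌋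

/-- The lazy remainders `s_{β,n}(x)`. -/
noncomputable def lazyS (β : ℕ → ℝ) (x : ℝ) : ℕ → ℝ
  | 0 => β 0 * x - (⌈β 0 * x - xB (shiftBase β 1)⌉ : ℝ)
  | n + 1 => β (n + 1) * lazyS β x n -
      (⌈β (n + 1) * lazyS β x n - xB (shiftBase β (n + 2))⌉ : ℝ)

/-- The lazy digits `ξ_{β,n}(x)`; `lazyDigit β x` is the lazy β-expansion `ℓ_β(x)`. -/
noncomputable def lazyDigit (β : ℕ → ℝ) (x : ℝ) : ℕ → ℤ
  | 0 => ⌈β 0 * x - xB (shiftBase β 1)⌉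
  | n + 1 => ⌈β (n + 1) * lazyS β x n - xB (shiftBase β (n + 2))⌉

/-- Strict lexicographic order on infinite words. -/
def lexLt (a b : ℕ → ℤ) : Prop := ∃ k, (∀ i < k, a i = b i) ∧ a k < b k

/-- Lexicographic order on infinite words. -/
def lexLe (a b : ℕ → ℤ) : Prop := lexLt a b ∨ a = b

/-- `D_β`, the set of greedy β-expansions of points of `[0,1)`. -/
def greedySet (β : ℕ → ℝ) : Set (ℕ → ℤ) :=
  {a | ∃ x ∈ Set.Ico (0 : ℝ) 1, a = greedyDigit β x}

/-- `D'_β`, the set of lazy β-expansions of points of `(x_β - 1, x_β]`. -/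
def lazySet (β : ℕ → ℝ) : Set (ℕ → ℤ) :=
  {a | ∃ x ∈ Set.Ioc (xB β - 1) (xB β), a = lazyDigit β x}

/-- `Δ'_β = ⋃_n D'_{β^(n)}`. -/
def deltaSet (β : ℕ → ℝ) : Set (ℕ → ℤ) := ⋃ n, lazySet (shiftBase β n)

/-!
Words of `S'_β` have admissible digits, and their tails from position `k` lie in `S'_{β^(k)}`,
since the tail of a lazy expansion is the lazy expansion of the remainder in the shifted base.
The lazy expansion of `x` has partial sums `x - s_N / (β_0 ⋯ β_N)` with `s_N ≤ x_{β^(N+1)}`, so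
every word of `S'_β`, as a limit of lazy expansions, has value at least `x_β - 1`, whereas every
admissible word has value at most `x_β`. If `a` and `b` first differ at `k` with `a_k < b_k`, then
`a_k + val(a^(k+1)) ≤ a_k + x_{β^(k+1)} ≤ b_k - 1 + x_{β^(k+1)} ≤ b_k + val(b^(k+1))`, which gives
(1); (2) follows from (1) because the lexicographic order is total.
-/

open Finset Filter Topology

def shiftWord (a : ℕ → ℤ) (k : ℕ) : ℕ → ℤ := fun n => a (k + n)

noncomputable def maxWord (β : ℕ → ℝ) : ℕ → ℤ := fun n => ⌈β n⌉ - 1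

lemma lexLt_iff_toLex_lt {a b : ℕ → ℤ} : lexLt a b ↔ toLex a < toLex b := Iff.rfl

section

variable {β : ℕ → ℝ}

lemma shiftBase_zero (β : ℕ → ℝ) : shiftBase β 0 = β := funext fun n => by simp [shiftBase]

lemma shiftBase_shiftBase (β : ℕ → ℝ) (k m : ℕ) :
    shiftBase (shiftBase β k) m = shiftBase β (k + m) :=
  funext fun n => by simp only [shiftBase, Nat.add_assoc]

lemma shiftWord_zero (a : ℕ → ℤ) : shiftWord a 0 = a := funext fun n => by simp [shiftWord]

lemma shiftWord_shiftWord (a : ℕ → ℤ) (k m : ℕ) :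
    shiftWord (shiftWord a k) m = shiftWord a (k + m) :=
  funext fun n => by simp only [shiftWord, Nat.add_assoc]

lemma continuous_shiftWord (k : ℕ) : Continuous fun a : ℕ → ℤ => shiftWord a k := by
  unfold shiftWord; fun_prop

lemma prodUpTo_pos (hβ : ∀ n, 0 < β n) (n : ℕ) : 0 < prodUpTo β n :=
  prod_pos fun i _ => hβ i

lemma prodUpTo_zero : prodUpTo β 0 = β 0 := by simp [prodUpTo]

lemma prod_range_mul_prodUpTo_shiftBase (k m : ℕ) :
    (∏ i ∈ range k, β i) * prodUpTo (shiftBase β k) m = prodUpTo β (k + m) :=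
  (prod_range_add β k (m + 1)).symm

lemma div_prodUpTo_shiftBase (hβ : ∀ n, 0 < β n) (r : ℝ) (k n : ℕ) :
    r / prodUpTo (shiftBase β k) n = (∏ i ∈ range k, β i) * (r / prodUpTo β (k + n)) := by
  have hQ : (∏ i ∈ range k, β i) ≠ 0 := (prod_pos fun i _ => hβ i).ne'
  rw [← prod_range_mul_prodUpTo_shiftBase, mul_div_assoc', mul_div_mul_left _ _ hQ]

lemma summable_shiftWord {a : ℕ → ℤ} (hβ : ∀ n, 0 < β n)
    (hs : Summable fun n => (a n : ℝ) / prodUpTo β n) (k : ℕ) :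
    Summable fun n => (shiftWord a k n : ℝ) / prodUpTo (shiftBase β k) n := by
  have h := ((summable_nat_add_iff k).2 hs).mul_left (∏ i ∈ range k, β i)
  refine h.congr fun n => ?_
  rw [div_prodUpTo_shiftBase hβ, shiftWord, Nat.add_comm n k]

lemma valB_eq_sum_add_valB_shiftWord {a : ℕ → ℤ} (hβ : ∀ n, 0 < β n)
    (hs : Summable fun n => (a n : ℝ) / prodUpTo β n) (k : ℕ) :
    valB β a = ∑ n ∈ range k, (a n : ℝ) / prodUpTo β n
      + valB (shiftBase β k) (shiftWord a k) / ∏ i ∈ range k, β i := by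
  have hQ : (∏ i ∈ range k, β i) ≠ 0 := (prod_pos fun i _ => hβ i).ne'
  rw [valB, ← hs.sum_add_tsum_nat_add k, valB, ← tsum_div_const]
  congr 1
  refine tsum_congr fun n => ?_
  rw [div_prodUpTo_shiftBase hβ, shiftWord, Nat.add_comm n k, mul_div_cancel_left₀ _ hQ]

lemma xB_eq_valB_maxWord (β : ℕ → ℝ) : xB β = valB β (maxWord β) := by
  simp [xB, valB, maxWord]

lemma xBSummable_iff : XBSummable β ↔ Summable fun n => (maxWord β n : ℝ) / prodUpTo β n := by
  simp [XBSummable, maxWord]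

lemma shiftWord_maxWord (β : ℕ → ℝ) (k : ℕ) : shiftWord (maxWord β) k = maxWord (shiftBase β k) :=
  rfl

lemma xBSummable_shiftBase (hβ : ∀ n, 0 < β n) (hx : XBSummable β) (k : ℕ) :
    XBSummable (shiftBase β k) := by
  rw [xBSummable_iff] at hx ⊢
  exact summable_shiftWord hβ hx k

lemma xB_eq_sum_add_xB_shiftBase (hβ : ∀ n, 0 < β n) (hx : XBSummable β) (k : ℕ) :
    xB β = ∑ n ∈ range k, (maxWord β n : ℝ) / prodUpTo β n
      + xB (shiftBase β k) / ∏ i ∈ range k, β i := by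
  rw [xB_eq_valB_maxWord, xB_eq_valB_maxWord, ← shiftWord_maxWord]
  exact valB_eq_sum_add_valB_shiftWord hβ (xBSummable_iff.1 hx) k

lemma mul_xB (hβ : ∀ n, 0 < β n) (hx : XBSummable β) :
    β 0 * xB β = (⌈β 0⌉ - 1 : ℝ) + xB (shiftBase β 1) := by
  rw [xB_eq_sum_add_xB_shiftBase hβ hx 1]
  simp only [sum_range_one, prod_range_one, prodUpTo_zero, maxWord, Int.cast_sub, Int.cast_one]
  field_simp [(hβ 0).ne']

lemma tendsto_xB_shiftBase_div_prodUpTo (hβ : ∀ n, 0 < β n) (hx : XBSummable β) :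
    Tendsto (fun N => xB (shiftBase β (N + 1)) / prodUpTo β N) atTop (𝓝 0) := by
  have hsum : Tendsto (fun N => ∑ n ∈ range (N + 1), (maxWord β n : ℝ) / prodUpTo β n) atTop
      (𝓝 (xB β)) := by
    rw [xB_eq_valB_maxWord]
    exact ((xBSummable_iff.1 hx).hasSum.tendsto_sum_nat).comp (tendsto_add_atTop_nat 1)
  have hlim := (tendsto_const_nhds (x := xB β)).sub hsum
  rw [sub_self] at hlim
  refine hlim.congr fun N => ?_
  rw [xB_eq_sum_add_xB_shiftBase hβ hx (N + 1)]
  simp [prodUpTo]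

lemma validWord_shiftWord {a : ℕ → ℤ} (ha : validWord β a) (k : ℕ) :
    validWord (shiftBase β k) (shiftWord a k) :=
  fun n => ha (k + n)

lemma summable_of_validWord {a : ℕ → ℤ} (hβ : ∀ n, 0 < β n) (hx : XBSummable β)
    (ha : validWord β a) : Summable fun n => (a n : ℝ) / prodUpTo β n := by
  refine (xBSummable_iff.1 hx).of_nonneg_of_le (fun n => ?_) (fun n => ?_)
  · exact div_nonneg (Int.cast_nonneg (ha n).1) (prodUpTo_pos hβ n).le
  · exact div_le_div_of_nonneg_right (Int.cast_le.2 (ha n).2) (prodUpTo_pos hβ n).le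

lemma valB_le_xB {a : ℕ → ℤ} (hβ : ∀ n, 0 < β n) (hx : XBSummable β) (ha : validWord β a) :
    valB β a ≤ xB β := by
  rw [xB_eq_valB_maxWord]
  refine (summable_of_validWord hβ hx ha).tsum_le_tsum (fun n => ?_) (xBSummable_iff.1 hx)
  exact div_le_div_of_nonneg_right (Int.cast_le.2 (ha n).2) (prodUpTo_pos hβ n).le

lemma sum_range_le_valB {a : ℕ → ℤ} (hβ : ∀ n, 0 < β n) (hx : XBSummable β)
    (ha : validWord β a) (N : ℕ) : ∑ n ∈ range N, (a n : ℝ) / prodUpTo β n ≤ valB β a :=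
  (summable_of_validWord hβ hx ha).sum_le_tsum _ fun n _ =>
    div_nonneg (Int.cast_nonneg (ha n).1) (prodUpTo_pos hβ n).le

lemma sub_ceil_sub_mem_Ioc (r t : ℝ) : r - ⌈r - t⌉ ∈ Set.Ioc (t - 1) t := by
  constructor <;> linarith [Int.ceil_lt_add_one (r - t), Int.le_ceil (r - t)]

lemma lazyS_mem_Ioc (x : ℝ) (n : ℕ) :
    lazyS β x n ∈ Set.Ioc (xB (shiftBase β (n + 1)) - 1) (xB (shiftBase β (n + 1))) := by
  cases n <;> exact sub_ceil_sub_mem_Ioc _ _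

lemma lazyS_succ (x : ℝ) (n : ℕ) :
    lazyS β x (n + 1) = lazyS (shiftBase β 1) (lazyS β x 0) n := by
  induction n with
  | zero => simp only [lazyS, shiftBase_shiftBase]; simp [shiftBase]
  | succ n ih =>
    rw [lazyS.eq_2 β x (n + 1), ih, lazyS.eq_2 (shiftBase β 1) _ n, shiftBase_shiftBase]
    simp [shiftBase, Nat.add_comm 1]

lemma lazyDigit_succ (x : ℝ) (n : ℕ) :
    lazyDigit β x (n + 1) = lazyDigit (shiftBase β 1) (lazyS β x 0) n := by
  cases n with
  | zero => simp only [lazyDigit, shiftBase_shiftBase]; simp [shiftBase]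
  | succ n =>
    rw [lazyDigit.eq_2 β x (n + 1), lazyS_succ, lazyDigit.eq_2 (shiftBase β 1) _ n,
      shiftBase_shiftBase]
    simp [shiftBase, Nat.add_comm 1]

lemma lazyDigit_zero_mem_Icc (hβ : ∀ n, 0 < β n) (hx : XBSummable β) {x : ℝ}
    (hmem : x ∈ Set.Ioc (xB β - 1) (xB β)) : lazyDigit β x 0 ∈ Set.Icc 0 (⌈β 0⌉ - 1) := by
  have hrec := mul_xB hβ hx
  have hceil := Int.le_ceil (β 0)
  constructor
  · have hgt : ((-1 : ℤ) : ℝ) < β 0 * x - xB (shiftBase β 1) := by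
      push_cast
      nlinarith [mul_lt_mul_of_pos_left hmem.1 (hβ 0)]
    have hceil_gt := Int.lt_ceil.2 hgt
    simp only [lazyDigit]
    omega
  · refine Int.ceil_le.2 ?_
    push_cast
    nlinarith [mul_le_mul_of_nonneg_left hmem.2 (hβ 0).le]

lemma sum_range_lazyDigit (hβ : ∀ n, 0 < β n) (x : ℝ) (N : ℕ) :
    ∑ n ∈ range (N + 1), (lazyDigit β x n : ℝ) / prodUpTo β n
      = x - lazyS β x N / prodUpTo β N := by
  induction N with
  | zero =>
    simp only [zero_add, sum_range_one, prodUpTo_zero, lazyS, lazyDigit]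
    field_simp [(hβ 0).ne']
    ring
  | succ N ih =>
    have hP : prodUpTo β (N + 1) = prodUpTo β N * β (N + 1) := prod_range_succ _ _
    have hdigit : (lazyDigit β x (N + 1) : ℝ) = β (N + 1) * lazyS β x N - lazyS β x (N + 1) := by
      simp only [lazyDigit, lazyS]; ring
    rw [sum_range_succ, ih, hdigit, hP]
    field_simp [(prodUpTo_pos hβ N).ne', (hβ (N + 1)).ne']
    ring

lemma shiftWord_mem_lazySet {c : ℕ → ℤ} (hc : c ∈ lazySet β) :
    shiftWord c 1 ∈ lazySet (shiftBase β 1) := by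
  obtain ⟨x, -, rfl⟩ := hc
  refine ⟨lazyS β x 0, lazyS_mem_Ioc x 0, funext fun n => ?_⟩
  rw [shiftWord, Nat.add_comm, lazyDigit_succ]

lemma shiftWord_mem_closure_lazySet {b : ℕ → ℤ} (hb : b ∈ closure (lazySet β)) (k : ℕ) :
    shiftWord b k ∈ closure (lazySet (shiftBase β k)) := by
  induction k with
  | zero => rwa [shiftWord_zero, shiftBase_zero]
  | succ k ih =>
    rw [← shiftWord_shiftWord, ← shiftBase_shiftBase]
    exact map_mem_closure (f := fun c => shiftWord c 1) (continuous_shiftWord 1) ih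
      fun c hc => shiftWord_mem_lazySet hc

lemma head_mem_Icc_of_mem_closure_lazySet (hβ : ∀ n, 0 < β n) (hx : XBSummable β)
    {b : ℕ → ℤ} (hb : b ∈ closure (lazySet β)) : b 0 ∈ Set.Icc 0 (⌈β 0⌉ - 1) := by
  have hclosed : IsClosed {c : ℕ → ℤ | c 0 ∈ Set.Icc 0 (⌈β 0⌉ - 1)} :=
    (isClosed_discrete _).preimage (continuous_apply 0)
  refine closure_minimal ?_ hclosed hb
  rintro _ ⟨x, hmem, rfl⟩
  exact lazyDigit_zero_mem_Icc hβ hx hmem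

lemma validWord_of_mem_closure_lazySet (hβ : ∀ n, 0 < β n) (hx : XBSummable β)
    {b : ℕ → ℤ} (hb : b ∈ closure (lazySet β)) : validWord β b := fun n =>
  head_mem_Icc_of_mem_closure_lazySet (fun m => hβ (n + m)) (xBSummable_shiftBase hβ hx n)
    (shiftWord_mem_closure_lazySet hb n)

lemma xB_sub_one_le_valB (hβ : ∀ n, 0 < β n) (hx : XBSummable β) {b : ℕ → ℤ}
    (hb : b ∈ closure (lazySet β)) : xB β - 1 ≤ valB β b := by
  set tail := fun N => xB (shiftBase β (N + 1)) / prodUpTo β N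
  have hsum (N : ℕ) : xB β - 1 - tail N ≤ ∑ n ∈ range (N + 1), (b n : ℝ) / prodUpTo β n := by
    have hclosed : IsClosed
        {c : ℕ → ℤ | xB β - 1 - tail N ≤ ∑ n ∈ range (N + 1), (c n : ℝ) / prodUpTo β n} :=
      isClosed_le continuous_const (by fun_prop)
    refine closure_minimal ?_ hclosed hb
    rintro _ ⟨x, hmem, rfl⟩
    have hs := (lazyS_mem_Ioc (β := β) x N).2
    rw [Set.mem_ofPred_eq, sum_range_lazyDigit hβ]
    have hrem : lazyS β x N / prodUpTo β N ≤ tail N :=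
      div_le_div_of_nonneg_right hs (prodUpTo_pos hβ N).le
    linarith [hmem.1]
  have hlim : Tendsto (fun N => xB β - 1 - tail N) atTop (𝓝 (xB β - 1)) := by
    simpa using (tendsto_xB_shiftBase_div_prodUpTo hβ hx).const_sub (xB β - 1)
  refine le_of_tendsto' hlim fun N => (hsum N).trans ?_
  exact sum_range_le_valB hβ hx (validWord_of_mem_closure_lazySet hβ hx hb) _

lemma valB_le_valB_of_head_lt (hβ : ∀ n, 0 < β n) (hx : XBSummable β) {a b : ℕ → ℤ}
    (ha : a ∈ closure (lazySet β)) (hb : b ∈ closure (lazySet β)) (hab : a 0 < b 0) :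
    valB β a ≤ valB β b := by
  have hβ₁ : ∀ n, 0 < shiftBase β 1 n := fun n => hβ (1 + n)
  have hva := validWord_of_mem_closure_lazySet hβ hx ha
  have hvb := validWord_of_mem_closure_lazySet hβ hx hb
  have hta : valB (shiftBase β 1) (shiftWord a 1) ≤ xB (shiftBase β 1) :=
    valB_le_xB hβ₁ (xBSummable_shiftBase hβ hx 1) (validWord_shiftWord hva 1)
  have htb : xB (shiftBase β 1) - 1 ≤ valB (shiftBase β 1) (shiftWord b 1) :=
    xB_sub_one_le_valB hβ₁ (xBSummable_shiftBase hβ hx 1) (shiftWord_mem_closure_lazySet hb 1)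
  have hdigit : (a 0 : ℝ) + 1 ≤ b 0 := by exact_mod_cast hab
  rw [valB_eq_sum_add_valB_shiftWord hβ (summable_of_validWord hβ hx hva) 1,
    valB_eq_sum_add_valB_shiftWord hβ (summable_of_validWord hβ hx hvb) 1]
  simp only [sum_range_one, prod_range_one, prodUpTo_zero, ← add_div]
  exact div_le_div_of_nonneg_right (by linarith) (hβ 0).le

lemma valB_le_valB_of_lexLt (hβ : ∀ n, 0 < β n) (hx : XBSummable β) {a b : ℕ → ℤ}
    (ha : a ∈ closure (lazySet β)) (hb : b ∈ closure (lazySet β)) (hab : lexLt a b) :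
    valB β a ≤ valB β b := by
  obtain ⟨k, hprefix, hk⟩ := hab
  have htail : valB (shiftBase β k) (shiftWord a k) ≤ valB (shiftBase β k) (shiftWord b k) :=
    valB_le_valB_of_head_lt (fun n => hβ (k + n)) (xBSummable_shiftBase hβ hx k)
      (shiftWord_mem_closure_lazySet ha k) (shiftWord_mem_closure_lazySet hb k) hk
  have hsum : ∑ n ∈ range k, (a n : ℝ) / prodUpTo β n = ∑ n ∈ range k, (b n : ℝ) / prodUpTo β n :=
    sum_congr rfl fun n hn => by rw [hprefix n (mem_range.1 hn)]
  rw [valB_eq_sum_add_valB_shiftWord hβ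
      (summable_of_validWord hβ hx (validWord_of_mem_closure_lazySet hβ hx ha)) k,
    valB_eq_sum_add_valB_shiftWord hβ
      (summable_of_validWord hβ hx (validWord_of_mem_closure_lazySet hβ hx hb)) k, hsum]
  gcongr
  exact (prod_pos fun i _ => hβ i).le

end

/-- on `S'_β`, lexicographic order and values are compatible. -/
theorem lazyShiftClosure_order (β : ℕ → ℝ) (hβ : IsCantorBase β) (hx : XBSummable β)
    (a b : ℕ → ℤ) (ha : a ∈ closure (lazySet β)) (hb : b ∈ closure (lazySet β)) :
    (lexLt a b → valB β a ≤ valB β b) ∧ (valB β a < valB β b → lexLt a b) := by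
  have hpos : ∀ n, 0 < β n := fun n => zero_lt_one.trans (hβ.one_lt n)
  refine ⟨valB_le_valB_of_lexLt hpos hx ha hb, fun hlt => ?_⟩
  rcases lt_trichotomy (toLex a) (toLex b) with hab | hab | hba
  · exact lexLt_iff_toLex_lt.2 hab
  · rw [toLex_inj.1 hab] at hlt
    exact absurd hlt (lt_irrefl _)
  · exact absurd hlt (valB_le_valB_of_lexLt hpos hx hb ha (lexLt_iff_toLex_lt.2 hba)).not_gt
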